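/- arXiv:1812.09370 — 3 statements merged into one kernel-verified Lean document; each statement's English description precedes it below -/
import Mathlib

section
/- Let S = clade(T₁) ∪ clade(T₂) for rooted trees T₁, T₂ on leaf set [n], let CIP(S) be its clade intersection poset, and let C ⊆ [n] with |C| ≥ 2. If D is the minimal element of CIP(S) containing C, then there exist i, j ∈ C such that D is the minimal element of CIP(S) containing {i,j}. -/
/-!
Call `i, j ∈ C` linked in a tree if some clade contains both but not all of `C`, i.e. their
lowest common ancestor lies strictly below that of `C`. In each tree this is a partial
equivalence relation, and no leaf is linked to all of `C`: the clades witnessing this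
contain a common leaf, hence form a chain, and the largest of them would contain `C`.
For two such relations `r₁, r₂` there is always a pair in `C` linked in neither tree: fix
`i ∈ C`; either some `j` is linked to `i` in neither tree, or every `j` is linked to `i` in
one of them, and then a `j` unlinked to `i` in the first tree and a `k` unlinked to `i` in
the second are linked in neither. Every element of `CIP(S)` containing such a pair
is an intersection of clades containing all of `C`, so it lies above `D`.
-/

/-- A rooted tree on leaf set `[n]`, identified with its family of clades. -/
def IsCladeFamily {n : ℕ} (F : Finset (Finset (Fin n))) : Prop :=
  Finset.univ ∈ F ∧ (∀ i : Fin n, {i} ∈ F) ∧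
  ∀ A ∈ F, ∀ B ∈ F, A ⊆ B ∨ B ⊆ A ∨ Disjoint A B

/-- The clade intersection poset `CIP(S)`. -/
def CIP {n : ℕ} (S : Finset (Finset (Fin n))) : Finset (Finset (Fin n)) :=
  S ∪ ((S.powerset.filter (fun P => P.Nonempty)).image (fun P => P.inf id)).filter
      (fun A => 2 ≤ A.card)

lemma exists_pair_not_rel_of_not_rel {α : Type*} {C : Set α} {r s : α → α → Prop}
    (hr_symm : Std.Symm r) (hr_trans : IsTrans α r) (hs_trans : IsTrans α s)
    {i : α} (hi : i ∈ C) (hr : ∃ j ∈ C, ¬ r i j) (hs : ∃ k ∈ C, ¬ s i k) :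
    ∃ j ∈ C, ∃ k ∈ C, ¬ r j k ∧ ¬ s j k := by
  by_cases hdirect : ∃ j ∈ C, ¬ r i j ∧ ¬ s i j
  · obtain ⟨j, hj, hrij, hsij⟩ := hdirect
    exact ⟨i, hi, j, hj, hrij, hsij⟩
  push Not at hdirect
  obtain ⟨j, hj, hrij⟩ := hr
  obtain ⟨k, hk, hsik⟩ := hs
  have hsij : s i j := hdirect j hj hrij
  have hrik : r i k := by_contra fun h => hsik (hdirect k hk h)
  exact ⟨j, hj, k, hk, fun hrjk => hrij (hr_trans.trans _ _ _ hrik (hr_symm.symm _ _ hrjk)),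
    fun hsjk => hsik (hs_trans.trans _ _ _ hsij hsjk)⟩

section Laminar

variable {α : Type*} {F : Finset (Finset α)} {C : Finset α}

def IsLaminar (F : Finset (Finset α)) : Prop :=
  ∀ A ∈ F, ∀ B ∈ F, A ⊆ B ∨ B ⊆ A ∨ Disjoint A B

lemma IsLaminar.subset_or_subset (hF : IsLaminar F) {A B : Finset α} (hA : A ∈ F)
    (hB : B ∈ F) {x : α} (hxA : x ∈ A) (hxB : x ∈ B) : A ⊆ B ∨ B ⊆ A :=
  (hF A hA B hB).imp_right fun h => h.resolve_right (Finset.not_disjoint_iff.mpr ⟨x, hxA, hxB⟩)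

/-- In the tree with clade family `F`, the lowest common ancestor of `i` and `j` lies strictly
below that of `C`. -/
def LinkedBelow (F : Finset (Finset α)) (C : Finset α) (i j : α) : Prop :=
  ∃ B ∈ F, i ∈ B ∧ j ∈ B ∧ ¬ C ⊆ B

lemma not_linkedBelow_iff {i j : α} :
    ¬ LinkedBelow F C i j ↔ ∀ B ∈ F, i ∈ B → j ∈ B → C ⊆ B := by
  simp only [LinkedBelow, not_exists, not_and, not_not]

lemma linkedBelow_self {i : α} (hi : {i} ∈ F) (hC : 2 ≤ C.card) : LinkedBelow F C i i :=
  ⟨{i}, hi, Finset.mem_singleton_self i, Finset.mem_singleton_self i, fun h => by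
    simpa using (Finset.card_le_card h).trans_lt' hC⟩

instance : Std.Symm (LinkedBelow F C) :=
  ⟨fun _ _ ⟨B, hB, hi, hj, hCB⟩ => ⟨B, hB, hj, hi, hCB⟩⟩

lemma IsLaminar.isTrans_linkedBelow (hF : IsLaminar F) : IsTrans α (LinkedBelow F C) := by
  refine ⟨?_⟩
  rintro i k j ⟨B, hB, hiB, hkB, hCB⟩ ⟨B', hB', hkB', hjB', hCB'⟩
  rcases hF.subset_or_subset hB hB' hkB hkB' with h | h
  · exact ⟨B', hB', h hiB, hjB', hCB'⟩
  · exact ⟨B, hB, hiB, h hjB', hCB⟩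

lemma IsLaminar.exists_not_linkedBelow (hF : IsLaminar F) (hC : C.Nonempty) (i : α) :
    ∃ j ∈ C, ¬ LinkedBelow F C i j := by
  classical
  by_contra! hlinked
  set G := F.filter fun B => i ∈ B ∧ ¬ C ⊆ B
  have hG : G.Nonempty := by
    obtain ⟨j, hj⟩ := hC
    obtain ⟨B, hB, hiB, -, hCB⟩ := hlinked j hj
    exact ⟨B, Finset.mem_filter.mpr ⟨hB, hiB, hCB⟩⟩
  obtain ⟨M, hMG, hMmax⟩ := G.exists_max_image Finset.card hG
  obtain ⟨hM, hiM, hCM⟩ := Finset.mem_filter.mp hMG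
  refine hCM fun j hj => ?_
  obtain ⟨B, hB, hiB, hjB, hCB⟩ := hlinked j hj
  rcases hF.subset_or_subset hB hM hiB hiM with h | h
  · exact h hjB
  · have hBG : B ∈ G := Finset.mem_filter.mpr ⟨hB, hiB, hCB⟩
    exact (Finset.eq_of_subset_of_card_le h (hMmax B hBG)) ▸ hjB

lemma exists_pair_not_linkedBelow {F₁ F₂ : Finset (Finset α)} (h₁ : IsLaminar F₁)
    (h₂ : IsLaminar F₂) (hC : C.Nonempty) :
    ∃ i ∈ C, ∃ j ∈ C, ¬ LinkedBelow F₁ C i j ∧ ¬ LinkedBelow F₂ C i j := by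
  obtain ⟨i, hi⟩ := hC
  exact exists_pair_not_rel_of_not_rel (C := (C : Set α)) inferInstance
    h₁.isTrans_linkedBelow h₂.isTrans_linkedBelow hi
    (h₁.exists_not_linkedBelow ⟨i, hi⟩ i) (h₂.exists_not_linkedBelow ⟨i, hi⟩ i)

end Laminar

lemma IsCladeFamily.isLaminar {n : ℕ} {F : Finset (Finset (Fin n))} (hF : IsCladeFamily F) :
    IsLaminar F :=
  hF.2.2

lemma subset_of_mem_CIP {n : ℕ} {S : Finset (Finset (Fin n))} {C D : Finset (Fin n)}
    (hD : D ∈ CIP S) (hC : ∀ B ∈ S, D ⊆ B → C ⊆ B) : C ⊆ D := by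
  rcases Finset.mem_union.mp hD with hDS | hD
  · exact hC D hDS subset_rfl
  · obtain ⟨P, hP, rfl⟩ := Finset.mem_image.mp (Finset.mem_filter.mp hD).1
    have hPS : P ⊆ S := Finset.mem_powerset.mp (Finset.mem_filter.mp hP).1
    exact Finset.le_inf fun B hB => hC B (hPS hB) (Finset.inf_le hB)

theorem cip_minimal_pair_general {n : ℕ} (F₁ F₂ : Finset (Finset (Fin n)))
    (h₁ : IsCladeFamily F₁) (h₂ : IsCladeFamily F₂)
    (C D : Finset (Fin n)) (hC : 2 ≤ C.card)
    (hmin : ∀ D' ∈ CIP (F₁ ∪ F₂), C ⊆ D' → D ⊆ D') :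
    ∃ i ∈ C, ∃ j ∈ C, i ≠ j ∧
      ∀ D' ∈ CIP (F₁ ∪ F₂), i ∈ D' → j ∈ D' → D ⊆ D' := by
  obtain ⟨i, hi, j, hj, hij₁, hij₂⟩ :=
    exists_pair_not_linkedBelow h₁.isLaminar h₂.isLaminar (Finset.card_pos.mp (by omega : 0 < C.card))
  refine ⟨i, hi, j, hj, ?_, fun D' hD' hiD' hjD' => hmin D' hD' (subset_of_mem_CIP hD' ?_)⟩
  · rintro rfl
    exact hij₁ (linkedBelow_self (h₁.2.1 i) hC)
  · intro B hB hD'B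
    rcases Finset.mem_union.mp hB with hB | hB
    · exact not_linkedBelow_iff.mp hij₁ B hB (hD'B hiD') (hD'B hjD')
    · exact not_linkedBelow_iff.mp hij₂ B hB (hD'B hiD') (hD'B hjD')

/-- Let `S = clade(T₁) ∪ clade(T₂)` and let `C ⊆ [n]` with `|C| ≥ 2`. If `D` is the
minimal element of `CIP(S)` containing `C`, then there are `i, j ∈ C` such that `D` is
the minimal element of `CIP(S)` containing `{i, j}`. -/
theorem cip_minimal_pair {n : ℕ} (F₁ F₂ : Finset (Finset (Fin n)))
    (h₁ : IsCladeFamily F₁) (h₂ : IsCladeFamily F₂)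
    (C D : Finset (Fin n)) (hC : 2 ≤ C.card)
    (hD : D ∈ CIP (F₁ ∪ F₂)) (hCD : C ⊆ D)
    (hmin : ∀ D' ∈ CIP (F₁ ∪ F₂), C ⊆ D' → D ⊆ D') :
    ∃ i ∈ C, ∃ j ∈ C, i ≠ j ∧
      ∀ D' ∈ CIP (F₁ ∪ F₂), i ∈ D' → j ∈ D' → D ⊆ D' :=
  cip_minimal_pair_general F₁ F₂ h₁ h₂ C D hC hmin
end

section
/- For rooted trees T₁, T₂ on leaf set [n], the rank of the graphic matroid of the clade graph G_{T₁,T₂} (number of vertices minus number of connected components) equals |clade(T₁) ∪ clade(T₂)|. Equivalently, the number of connected components of G_{T₁,T₂} equals |clade(T₁) ∩ clade(T₂)|. -/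
/-- The (non-singleton) clades of a tree: the sets of leaves below internal vertices. -/
def nsClades {n : ℕ} (F : Finset (Finset (Fin n))) : Finset (Finset (Fin n)) :=
  F.filter (fun A => 2 ≤ A.card)

/-- The most recent common ancestor (smallest clade containing both `u` and `v`). -/
def mca {n : ℕ} (F : Finset (Finset (Fin n))) (u v : Fin n) : Finset (Fin n) :=
  (F.filter (fun A => u ∈ A ∧ v ∈ A)).inf id

/-- The vertex set of the clade graph: the disjoint union of the clades of the two trees. -/
def CladeVert {n : ℕ} (F₁ F₂ : Finset (Finset (Fin n))) : Type :=
  {A // A ∈ nsClades F₁} ⊕ {A // A ∈ nsClades F₂}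

/-- The clade graph `G_{T₁,T₂}` (with parallel edges collapsed): `A` on the `T₁` side is
adjacent to `B` on the `T₂` side iff some pair `{i,j}` has `A` as its minimal `T₁`-clade
and `B` as its minimal `T₂`-clade. -/
def cladeGraph {n : ℕ} (F₁ F₂ : Finset (Finset (Fin n))) : SimpleGraph (CladeVert F₁ F₂) :=
  SimpleGraph.fromRel (fun x y => ∃ i j : Fin n, i ≠ j ∧
    ∃ (hA : mca F₁ i j ∈ nsClades F₁) (hB : mca F₂ i j ∈ nsClades F₂),
      x = Sum.inl ⟨mca F₁ i j, hA⟩ ∧ y = Sum.inr ⟨mca F₂ i j, hB⟩)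

/-! Every edge of the clade graph joins two clades whose smallest *common* clade (the smallest
clade of both trees containing them) is the same, so this common clade is an invariant of the
components, and every common clade `C` is attained at the vertex `C` itself.

Conversely, let `A` be a largest `T₁`-clade in the component of a vertex. If `A` were not a
`T₂`-clade, some pair `i, j` with `mca₁ i j = A` would have `mca₂ i j` containing a leaf
`k ∉ A`; one of the pairs `(i, k)`, `(j, k)` has the same `T₂`-clade `mca₂ i j`, so its
`T₁`-clade, which strictly contains `A`, lies in the same component. Hence `A` is a common
clade, necessarily the invariant of the component, and components with the same invariant
meet. Components therefore correspond to the common clades, and the vertex count is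
`|clade(T₁)| + |clade(T₂)| = |clade(T₁) ∩ clade(T₂)| + |clade(T₁) ∪ clade(T₂)|`. -/

open Finset

variable {n : ℕ}

def cladeHull (F : Finset (Finset (Fin n))) (S : Finset (Fin n)) : Finset (Fin n) :=
  (F.filter (S ⊆ ·)).inf id

section cladeHull

variable {F G : Finset (Finset (Fin n))} {S D : Finset (Fin n)}

lemma subset_cladeHull (F : Finset (Finset (Fin n))) (S : Finset (Fin n)) :
    S ⊆ cladeHull F S :=
  Finset.le_inf fun _ hD => (mem_filter.mp hD).2

lemma cladeHull_subset (hD : D ∈ F) (hSD : S ⊆ D) : cladeHull F S ⊆ D :=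
  Finset.inf_le (f := id) (mem_filter.mpr ⟨hD, hSD⟩)

lemma cladeHull_eq_self (hS : S ∈ F) : cladeHull F S = S :=
  (cladeHull_subset hS subset_rfl).antisymm (subset_cladeHull F S)

lemma mca_eq_cladeHull (F : Finset (Finset (Fin n))) (i j : Fin n) :
    mca F i j = cladeHull F {i, j} := by
  simp only [mca, cladeHull, insert_subset_iff, singleton_subset_iff]

lemma left_mem_mca (F : Finset (Finset (Fin n))) (i j : Fin n) : i ∈ mca F i j := by
  rw [mca_eq_cladeHull]
  exact subset_cladeHull F _ (mem_insert_self i {j})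

lemma right_mem_mca (F : Finset (Finset (Fin n))) (i j : Fin n) : j ∈ mca F i j := by
  rw [mca_eq_cladeHull]
  exact subset_cladeHull F _ (mem_insert_of_mem (mem_singleton_self j))

lemma mca_subset {i j : Fin n} (hD : D ∈ F) (hi : i ∈ D) (hj : j ∈ D) : mca F i j ⊆ D := by
  rw [mca_eq_cladeHull]
  exact cladeHull_subset hD (insert_subset hi (singleton_subset_iff.mpr hj))

lemma cladeHull_mca (hGF : G ⊆ F) (i j : Fin n) :
    cladeHull G (mca F i j) = mca G i j := by
  rw [mca_eq_cladeHull G, cladeHull, cladeHull]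
  refine congrArg _ (filter_congr fun D hD => ?_)
  rw [insert_subset_iff, singleton_subset_iff]
  exact ⟨fun h => ⟨h (left_mem_mca F i j), h (right_mem_mca F i j)⟩,
    fun h => mca_subset (hGF hD) h.1 h.2⟩

end cladeHull

namespace IsCladeFamily

variable {F G H : Finset (Finset (Fin n))} {A B C D S : Finset (Fin n)} {i j k a x : Fin n}

lemma subset_or_subset (hF : IsCladeFamily F) (hA : A ∈ F) (hB : B ∈ F) (hxA : x ∈ A)
    (hxB : x ∈ B) : A ⊆ B ∨ B ⊆ A :=
  (hF.2.2 A hA B hB).imp_right fun h => h.resolve_right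
    fun hAB => disjoint_left.mp hAB hxA hxB

lemma inter (hF : IsCladeFamily F) (hG : IsCladeFamily G) : IsCladeFamily (F ∩ G) :=
  ⟨mem_inter.mpr ⟨hF.1, hG.1⟩, fun i => mem_inter.mpr ⟨hF.2.1 i, hG.2.1 i⟩,
    fun A hA B hB => hF.2.2 A (mem_inter.mp hA).1 B (mem_inter.mp hB).1⟩

lemma cladeHull_mem (hF : IsCladeFamily F) (hS : S.Nonempty) : cladeHull F S ∈ F := by
  obtain ⟨x, hx⟩ := hS
  have hne : (F.filter (S ⊆ ·)).Nonempty := ⟨univ, mem_filter.mpr ⟨hF.1, subset_univ S⟩⟩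
  rw [cladeHull, ← inf'_eq_inf hne]
  refine (inf'_mem {A | A ∈ F ∧ S ⊆ A} ?_ _ hne id fun A hA => mem_filter.mp hA).1
  rintro A ⟨hA, hSA⟩ B ⟨hB, hSB⟩
  rcases hF.subset_or_subset hA hB (hSA hx) (hSB hx) with h | h
  · rw [inf_eq_left.mpr h]; exact ⟨hA, hSA⟩
  · rw [inf_eq_right.mpr h]; exact ⟨hB, hSB⟩

lemma mca_mem (hF : IsCladeFamily F) (i j : Fin n) : mca F i j ∈ F := by
  rw [mca_eq_cladeHull]
  exact hF.cladeHull_mem (insert_nonempty i {j})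

lemma mca_mem_nsClades (hF : IsCladeFamily F) (hij : i ≠ j) : mca F i j ∈ nsClades F :=
  mem_filter.mpr ⟨hF.mca_mem i j,
    one_lt_card.mpr ⟨i, left_mem_mca F i j, j, right_mem_mca F i j, hij⟩⟩

lemma ssubset_mca (hF : IsCladeFamily F) (hD : D ∈ F) (ha : a ∈ D) (hk : k ∉ D) :
    D ⊂ mca F a k := by
  rcases hF.subset_or_subset (hF.mca_mem a k) hD (left_mem_mca F a k) ha with h | h
  · exact absurd (h (right_mem_mca F a k)) hk
  · exact (ssubset_iff_of_subset h).mpr ⟨k, right_mem_mca F a k, hk⟩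

lemma mca_eq_or_mca_eq (hF : IsCladeFamily F) (hk : k ∈ mca F i j) :
    mca F i k = mca F i j ∨ mca F j k = mca F i j := by
  have hij := hF.mca_mem i j
  have hik : mca F i k ⊆ mca F i j := mca_subset hij (left_mem_mca F i j) hk
  have hjk : mca F j k ⊆ mca F i j := mca_subset hij (right_mem_mca F i j) hk
  rcases hF.subset_or_subset (hF.mca_mem i k) (hF.mca_mem j k) (right_mem_mca F i k)
    (right_mem_mca F j k) with h | h
  · exact .inr (hjk.antisymm
      (mca_subset (hF.mca_mem j k) (h (left_mem_mca F i k)) (left_mem_mca F j k)))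
  · exact .inl (hik.antisymm
      (mca_subset (hF.mca_mem i k) (left_mem_mca F i k) (h (left_mem_mca F j k))))

lemma exists_mca_eq (hF : IsCladeFamily F) (hC : C ∈ F) (h2 : 2 ≤ #C) :
    ∃ i j, i ≠ j ∧ mca F i j = C := by
  obtain ⟨a, ha, b, hb, hab⟩ := one_lt_card.mp h2
  have hne : C.offDiag.Nonempty := ⟨(a, b), mem_offDiag.mpr ⟨ha, hb, hab⟩⟩
  obtain ⟨⟨i, j⟩, hp, hmax⟩ := exists_max_image C.offDiag (fun p => #(mca F p.1 p.2)) hne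
  obtain ⟨hi, hj, hij⟩ := mem_offDiag.mp hp
  refine ⟨i, j, hij, by_contra fun hmC => ?_⟩
  obtain ⟨k, hkC, hk⟩ := exists_of_ssubset ((mca_subset hC hi hj).ssubset_of_ne hmC)
  have hlt := card_lt_card (hF.ssubset_mca (hF.mca_mem i j) (left_mem_mca F i j) hk)
  have hle := hmax (i, k)
    (mem_offDiag.mpr ⟨hi, hkC, ne_of_mem_of_not_mem (left_mem_mca F i j) hk⟩)
  exact (hlt.trans_le hle).false

/-- Among the pairs with `mca G i j = A`, one maximising `mca H i j` works: otherwise a leaf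
`k ∈ A \ mca H i j` would yield such a pair with a strictly larger `H`-clade. -/
lemma exists_mca_eq_not_subset (hG : IsCladeFamily G) (hH : IsCladeFamily H) (hA : A ∈ G)
    (h2 : 2 ≤ #A) (hAH : A ∉ H) :
    ∃ i j, i ≠ j ∧ mca G i j = A ∧ ¬ mca H i j ⊆ A := by
  classical
  have hne : (A.offDiag.filter fun p => mca G p.1 p.2 = A).Nonempty := by
    obtain ⟨i, j, hij, hm⟩ := hG.exists_mca_eq hA h2
    exact ⟨(i, j), mem_filter.mpr
      ⟨mem_offDiag.mpr ⟨hm ▸ left_mem_mca G i j, hm ▸ right_mem_mca G i j, hij⟩, hm⟩⟩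
  obtain ⟨⟨i, j⟩, hp, hmax⟩ := exists_max_image _ (fun p => #(mca H p.1 p.2)) hne
  obtain ⟨hp, hm⟩ := mem_filter.mp hp
  obtain ⟨-, -, hij⟩ := mem_offDiag.mp hp
  refine ⟨i, j, hij, hm, fun hsub => ?_⟩
  obtain ⟨k, hkA, hk⟩ :=
    exists_of_ssubset (hsub.ssubset_of_ne fun h => hAH (h ▸ hH.mca_mem i j))
  obtain ⟨a, ha, hak⟩ : ∃ a ∈ mca H i j, mca G a k = A :=
    (hG.mca_eq_or_mca_eq (hm ▸ hkA : k ∈ mca G i j)).elim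
      (fun h => ⟨i, left_mem_mca H i j, h.trans hm⟩)
      (fun h => ⟨j, right_mem_mca H i j, h.trans hm⟩)
  have hlt := card_lt_card (hH.ssubset_mca (hH.mca_mem i j) ha hk)
  have hle := hmax (a, k) (mem_filter.mpr
    ⟨mem_offDiag.mpr ⟨hsub ha, hkA, ne_of_mem_of_not_mem ha hk⟩, hak⟩)
  exact (hlt.trans_le hle).false

end IsCladeFamily

section cladeGraph

open SimpleGraph

variable {F₁ F₂ : Finset (Finset (Fin n))}

def CladeVert.clade : CladeVert F₁ F₂ → Finset (Fin n) :=
  Sum.elim Subtype.val Subtype.val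

def CladeVert.commonHull (v : CladeVert F₁ F₂) : Finset (Fin n) :=
  cladeHull (F₁ ∩ F₂) v.clade

lemma CladeVert.two_le_card_clade (v : CladeVert F₁ F₂) : 2 ≤ #v.clade := by
  rcases v with ⟨A, hA⟩ | ⟨A, hA⟩ <;> exact (mem_filter.mp hA).2

lemma CladeVert.commonHull_mem (h₁ : IsCladeFamily F₁) (h₂ : IsCladeFamily F₂)
    (v : CladeVert F₁ F₂) : v.commonHull ∈ nsClades F₁ ∩ nsClades F₂ := by
  have h2 : 2 ≤ #v.commonHull :=
    v.two_le_card_clade.trans (card_le_card (subset_cladeHull _ _))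
  have hne : v.clade.Nonempty := card_pos.mp (by have := v.two_le_card_clade; omega)
  obtain ⟨hmem₁, hmem₂⟩ := mem_inter.mp ((h₁.inter h₂).cladeHull_mem hne)
  exact mem_inter.mpr ⟨mem_filter.mpr ⟨hmem₁, h2⟩, mem_filter.mpr ⟨hmem₂, h2⟩⟩

lemma CladeVert.commonHull_inl {C : Finset (Fin n)} (hC : C ∈ nsClades F₁)
    (hC₂ : C ∈ F₂) :
    CladeVert.commonHull (Sum.inl ⟨C, hC⟩ : CladeVert F₁ F₂) = C :=
  cladeHull_eq_self (mem_inter.mpr ⟨(mem_filter.mp hC).1, hC₂⟩)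

lemma cladeGraph_adj {A B : Finset (Fin n)} (hA : A ∈ nsClades F₁) (hB : B ∈ nsClades F₂)
    {i j : Fin n} (hij : i ≠ j) (hiA : mca F₁ i j = A) (hiB : mca F₂ i j = B) :
    (cladeGraph F₁ F₂).Adj (Sum.inl ⟨A, hA⟩) (Sum.inr ⟨B, hB⟩) := by
  subst hiA hiB
  exact (fromRel_adj ..).mpr ⟨Sum.inl_ne_inr, .inl ⟨i, j, hij, hA, hB, rfl, rfl⟩⟩

lemma CladeVert.commonHull_eq_of_adj {u v : CladeVert F₁ F₂}
    (h : (cladeGraph F₁ F₂).Adj u v) : u.commonHull = v.commonHull := by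
  have hmca (i j : Fin n) :
      cladeHull (F₁ ∩ F₂) (mca F₁ i j) = cladeHull (F₁ ∩ F₂) (mca F₂ i j) :=
    (cladeHull_mca inter_subset_left i j).trans (cladeHull_mca inter_subset_right i j).symm
  rcases ((fromRel_adj ..).mp h).2 with
    ⟨i, j, -, -, -, rfl, rfl⟩ | ⟨i, j, -, -, -, rfl, rfl⟩
  · exact hmca i j
  · exact (hmca i j).symm

lemma CladeVert.commonHull_eq_of_reachable {u v : CladeVert F₁ F₂}
    (h : (cladeGraph F₁ F₂).Reachable u v) : u.commonHull = v.commonHull := by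
  obtain ⟨p⟩ := h
  induction p with
  | nil => rfl
  | cons hadj _ ih => exact (commonHull_eq_of_adj hadj).trans ih

lemma cladeGraph_exists_reachable_inl (h₁ : IsCladeFamily F₁) (h₂ : IsCladeFamily F₂)
    (v : CladeVert F₁ F₂) : ∃ A, ∃ hA : A ∈ nsClades F₁,
      (cladeGraph F₁ F₂).Reachable v (Sum.inl ⟨A, hA⟩) := by
  rcases v with ⟨A, hA⟩ | ⟨B, hB⟩
  · exact ⟨A, hA, .rfl⟩
  · obtain ⟨i, j, hij, hm⟩ := h₂.exists_mca_eq (mem_filter.mp hB).1 (mem_filter.mp hB).2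
    exact ⟨_, h₁.mca_mem_nsClades hij,
      (cladeGraph_adj (h₁.mca_mem_nsClades hij) hB hij rfl hm).reachable.symm⟩

lemma cladeGraph_exists_reachable_ssuperset (h₁ : IsCladeFamily F₁) (h₂ : IsCladeFamily F₂)
    {A : Finset (Fin n)} (hA : A ∈ nsClades F₁) (hA₂ : A ∉ F₂) :
    ∃ A', ∃ hA' : A' ∈ nsClades F₁, A ⊂ A' ∧
      (cladeGraph F₁ F₂).Reachable (Sum.inl ⟨A, hA⟩) (Sum.inl ⟨A', hA'⟩) := by
  obtain ⟨hA₁, h2⟩ := mem_filter.mp hA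
  obtain ⟨i, j, hij, hm, hsub⟩ := h₁.exists_mca_eq_not_subset h₂ hA₁ h2 hA₂
  obtain ⟨k, hk, hkA⟩ := not_subset.mp hsub
  have hB := h₂.mca_mem_nsClades hij
  obtain ⟨a, ha, hak⟩ : ∃ a ∈ A, mca F₂ a k = mca F₂ i j :=
    (h₂.mca_eq_or_mca_eq hk).elim (fun h => ⟨i, hm ▸ left_mem_mca F₁ i j, h⟩)
      (fun h => ⟨j, hm ▸ right_mem_mca F₁ i j, h⟩)
  have hne : a ≠ k := ne_of_mem_of_not_mem ha hkA
  have hA' := h₁.mca_mem_nsClades hne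
  exact ⟨_, hA', h₁.ssubset_mca hA₁ ha hkA,
    (cladeGraph_adj hA hB hij hm rfl).reachable.trans
      (cladeGraph_adj hA' hB hne rfl hak).reachable.symm⟩

/-- A largest `T₁`-clade reachable from `v` is a common clade, hence equal to `v.commonHull`. -/
lemma cladeGraph_reachable_inl_commonHull (h₁ : IsCladeFamily F₁) (h₂ : IsCladeFamily F₂)
    (v : CladeVert F₁ F₂) {C : Finset (Fin n)} (hC : C ∈ nsClades F₁)
    (hvC : v.commonHull = C) :
    (cladeGraph F₁ F₂).Reachable v (Sum.inl ⟨C, hC⟩) := by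
  classical
  obtain ⟨A, hA, hvA⟩ := cladeGraph_exists_reachable_inl h₁ h₂ v
  obtain ⟨M, hMS, hmax⟩ := exists_max_image
    ((nsClades F₁).filter fun A => ∃ hA : A ∈ nsClades F₁,
      (cladeGraph F₁ F₂).Reachable v (Sum.inl ⟨A, hA⟩)) card
    ⟨A, mem_filter.mpr ⟨hA, hA, hvA⟩⟩
  obtain ⟨-, hM, hvM⟩ := mem_filter.mp hMS
  have hM₂ : M ∈ F₂ := by
    by_contra hM₂
    obtain ⟨M', hM', hMM', hreach⟩ := cladeGraph_exists_reachable_ssuperset h₁ h₂ hM hM₂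
    exact (card_lt_card hMM').not_ge (hmax M' (mem_filter.mpr ⟨hM', hM', hvM.trans hreach⟩))
  have hMC : M = C :=
    (CladeVert.commonHull_inl hM hM₂).symm.trans
      ((CladeVert.commonHull_eq_of_reachable hvM).symm.trans hvC)
  subst hMC
  exact hvM

lemma cladeGraph_reachable_of_commonHull_eq (h₁ : IsCladeFamily F₁) (h₂ : IsCladeFamily F₂)
    {u v : CladeVert F₁ F₂} (h : u.commonHull = v.commonHull) :
    (cladeGraph F₁ F₂).Reachable u v :=
  have hC := (mem_inter.mp (u.commonHull_mem h₁ h₂)).1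
  (cladeGraph_reachable_inl_commonHull h₁ h₂ u hC rfl).trans
    (cladeGraph_reachable_inl_commonHull h₁ h₂ v hC h.symm).symm

lemma card_connectedComponent_cladeGraph (h₁ : IsCladeFamily F₁) (h₂ : IsCladeFamily F₂) :
    Nat.card (cladeGraph F₁ F₂).ConnectedComponent = #(nsClades F₁ ∩ nsClades F₂) := by
  let f : (cladeGraph F₁ F₂).ConnectedComponent →
      {C // C ∈ nsClades F₁ ∩ nsClades F₂} :=
    ConnectedComponent.lift (fun v => ⟨v.commonHull, v.commonHull_mem h₁ h₂⟩)
      fun _ _ p _ => Subtype.ext (CladeVert.commonHull_eq_of_reachable p.reachable)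
  have hf : Function.Bijective f := by
    refine ⟨fun c c' hcc' => ?_, fun ⟨C, hC⟩ => ?_⟩
    · induction c using ConnectedComponent.ind
      induction c' using ConnectedComponent.ind
      exact ConnectedComponent.sound
        (cladeGraph_reachable_of_commonHull_eq h₁ h₂ (congrArg Subtype.val hcc'))
    · obtain ⟨hC₁, hC₂⟩ := mem_inter.mp hC
      exact ⟨(cladeGraph F₁ F₂).connectedComponentMk (Sum.inl ⟨C, hC₁⟩),
        Subtype.ext (CladeVert.commonHull_inl hC₁ (mem_filter.mp hC₂).1)⟩
  rw [Nat.card_eq_of_bijective f hf, Nat.card_eq_fintype_card, Fintype.card_coe]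

lemma card_cladeVert : Nat.card (CladeVert F₁ F₂) = #(nsClades F₁) + #(nsClades F₂) := by
  rw [CladeVert, Nat.card_sum, Nat.card_eq_fintype_card, Nat.card_eq_fintype_card,
    Fintype.card_coe, Fintype.card_coe]

end cladeGraph

/-- The rank of the graphic matroid of the clade graph (number of vertices minus number
of connected components) equals `|clade(T₁) ∪ clade(T₂)|`; equivalently, the number of
connected components equals `|clade(T₁) ∩ clade(T₂)|`. -/
theorem cladeGraph_rank {n : ℕ} (F₁ F₂ : Finset (Finset (Fin n)))
    (h₁ : IsCladeFamily F₁) (h₂ : IsCladeFamily F₂) :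
    Nat.card (cladeGraph F₁ F₂).ConnectedComponent = (nsClades F₁ ∩ nsClades F₂).card ∧
    Nat.card (CladeVert F₁ F₂) =
      Nat.card (cladeGraph F₁ F₂).ConnectedComponent + (nsClades F₁ ∪ nsClades F₂).card := by
  rw [card_connectedComponent_cladeGraph h₁ h₂, card_cladeVert, card_inter_add_card_union]
  exact ⟨rfl, rfl⟩
end

section
/- If a graph H on vertex set [n] is obtained from a Laman graph H' on a vertex set of size n−1 by a Henneberg move of type 1 (adding a new vertex adjacent to two existing vertices), then H is Laman. -/
/-- The graph on `Fin (n+1)` obtained from `H` on `Fin n` by adding a new vertex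
(the last one) adjacent to the vertices in `s`. -/
def addVertex {n : ℕ} (H : SimpleGraph (Fin n)) (s : Finset (Fin n)) :
    SimpleGraph (Fin (n + 1)) :=
  SimpleGraph.fromRel (fun x y =>
    (∃ x' y' : Fin n, x = x'.castSucc ∧ y = y'.castSucc ∧ H.Adj x' y') ∨
    (x = Fin.last n ∧ ∃ a ∈ s, y = a.castSucc))

/-- The number of edges of `H` lying inside the vertex set `V`. -/
noncomputable def edgesWithin {n : ℕ} (H : SimpleGraph (Fin n)) (V : Finset (Fin n)) : ℕ :=
  Nat.card {e : Sym2 (Fin n) // e ∈ H.edgeSet ∧ ∀ v ∈ e, v ∈ V}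

/-- A graph on `m` vertices is Laman if it has `2m − 3` edges and every subgraph on `v`
vertices has at most `2v − 3` edges. -/
def IsLaman (n : ℕ) (H : SimpleGraph (Fin n)) : Prop :=
  Nat.card H.edgeSet = 2 * n - 3 ∧
  ∀ V : Finset (Fin n), 2 ≤ V.card → edgesWithin H V ≤ 2 * V.card - 3

/-!
The new vertex lies on exactly two new edges, which turns the count `2n − 3` into
`2(n + 1) − 3`. A vertex set `V` avoiding the new vertex only sees old edges. If `V` contains
it, `V` sees the old edges inside `V' = V \ {new}` together with at most `min(2, |V'|)` new ones;
this is at most `2|V'| − 3 + 2 = 2|V| − 3` when `|V'| ≥ 2`, and at most `1 = 2|V| − 3` when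
`|V'| = 1`, since then `V'` spans no old edge.
-/

open Finset

variable {n : ℕ}

lemma addVertex_adj_castSucc (H : SimpleGraph (Fin n)) (s : Finset (Fin n)) (x y : Fin n) :
    (addVertex H s).Adj x.castSucc y.castSucc ↔ H.Adj x y := by
  simp [addVertex, H.adj_comm y x, and_iff_right_of_imp H.ne_of_adj]

lemma addVertex_adj_last_castSucc (H : SimpleGraph (Fin n)) (s : Finset (Fin n)) (y : Fin n) :
    (addVertex H s).Adj (Fin.last n) y.castSucc ↔ y ∈ s := by
  simp [addVertex, (Fin.castSucc_ne_last _).symm]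

lemma last_notMem_map_castSucc (e : Sym2 (Fin n)) : Fin.last n ∉ e.map Fin.castSucc := by
  simp [Sym2.mem_map, Fin.castSucc_ne_last]

lemma edgeSet_addVertex (H : SimpleGraph (Fin n)) (s : Finset (Fin n)) :
    (addVertex H s).edgeSet =
      Sym2.map Fin.castSucc '' H.edgeSet ∪
        (fun c : Fin n ↦ s(Fin.last n, c.castSucc)) '' s := by
  have last_notMem_image (z : Fin (n + 1)) :
      s(Fin.last n, z) ∉ Sym2.map Fin.castSucc '' H.edgeSet := by
    rintro ⟨e, -, he⟩
    exact last_notMem_map_castSucc e (he ▸ Sym2.mem_mk_left _ _)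
  ext e
  induction e using Sym2.ind with | _ x y => ?_
  induction x using Fin.lastCases <;> induction y using Fin.lastCases
  · simp [last_notMem_image]
  · simp [last_notMem_image, addVertex_adj_last_castSucc]
  · rw [Sym2.eq_swap]
    simp [last_notMem_image, addVertex_adj_last_castSucc]
  · rw [Set.mem_union, ← Sym2.map_mk,
      (Sym2.map.injective (Fin.castSucc_injective n)).mem_set_image]
    simp [addVertex_adj_castSucc, (Fin.castSucc_ne_last _).symm]

lemma edgesWithin_eq_ncard (H : SimpleGraph (Fin n)) (V : Finset (Fin n)) :
    edgesWithin H V = (H.edgeSet ∩ {e | ∀ v ∈ e, v ∈ V}).ncard :=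
  Nat.card_coe_set_eq _

lemma card_edgeSet_eq_edgesWithin_univ (H : SimpleGraph (Fin n)) :
    Nat.card H.edgeSet = edgesWithin H univ := by
  simp [edgesWithin_eq_ncard, Nat.card_coe_set_eq]

lemma edgesWithin_eq_zero_of_card_le_one (H : SimpleGraph (Fin n)) {V : Finset (Fin n)}
    (hV : #V ≤ 1) : edgesWithin H V = 0 := by
  rw [edgesWithin_eq_ncard, Set.ncard_eq_zero, Set.eq_empty_iff_forall_notMem]
  rintro e ⟨he, hmem⟩
  induction e using Sym2.ind with | _ x y => ?_
  exact H.ne_of_adj he (card_le_one.mp hV x (hmem x (Sym2.mem_mk_left x y)) y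
    (hmem y (Sym2.mem_mk_right x y)))

lemma disjoint_image_map_castSucc_image_last (A : Set (Sym2 (Fin n))) (B : Set (Fin n)) :
    Disjoint (Sym2.map Fin.castSucc '' A) ((fun c : Fin n ↦ s(Fin.last n, c.castSucc)) '' B) := by
  rw [Set.disjoint_left]
  rintro _ ⟨e, -, rfl⟩ ⟨c, -, hc⟩
  exact last_notMem_map_castSucc e (hc ▸ Sym2.mem_mk_left _ _)

lemma edgesWithin_addVertex (H : SimpleGraph (Fin n)) (s : Finset (Fin n))
    (V : Finset (Fin (n + 1))) :
    edgesWithin (addVertex H s) V =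
      edgesWithin H (V.preimage Fin.castSucc (Fin.castSucc_injective n).injOn) +
        if Fin.last n ∈ V then #(s ∩ V.preimage Fin.castSucc (Fin.castSucc_injective n).injOn)
        else 0 := by
  have last_injective : (fun c : Fin n ↦ s(Fin.last n, c.castSucc)).Injective :=
    fun _ _ h ↦ Fin.castSucc_injective n (Sym2.congr_right.mp h)
  rw [edgesWithin_eq_ncard, edgeSet_addVertex, Set.union_inter_distrib_right,
    ← Set.image_inter_preimage, ← Set.image_inter_preimage,
    Set.ncard_union_eq (disjoint_image_map_castSucc_image_last _ _),
    Set.ncard_image_of_injective _ (Sym2.map.injective (Fin.castSucc_injective n)),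
    Set.ncard_image_of_injective _ last_injective, edgesWithin_eq_ncard]
  congr 1
  · congr 2
    ext e
    simp [Sym2.mem_map]
  · split_ifs with hlast
    · rw [← Set.ncard_coe_finset]
      congr 1
      ext c
      simp [hlast]
    · simp [hlast]

lemma card_preimage_castSucc (V : Finset (Fin (n + 1))) :
    #(V.preimage Fin.castSucc (Fin.castSucc_injective n).injOn) = #(V.erase (Fin.last n)) := by
  rw [← card_image_of_injective _ (Fin.castSucc_injective n)]
  congr 1
  ext x
  induction x using Fin.lastCases <;> simp [Fin.castSucc_ne_last]

/-- A Henneberg move of type 1 (adding a new vertex adjacent to two existing distinct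
vertices) applied to a Laman graph yields a Laman graph. -/
theorem henneberg_move1_laman {n : ℕ} (hn : 2 ≤ n) (H' : SimpleGraph (Fin n))
    (hH' : IsLaman n H') (a b : Fin n) (hab : a ≠ b) :
    IsLaman (n + 1) (addVertex H' {a, b}) := by
  obtain ⟨hcount, hsparse⟩ := hH'
  constructor
  · rw [card_edgeSet_eq_edgesWithin_univ, edgesWithin_addVertex, preimage_univ,
      if_pos (mem_univ _), inter_univ, ← card_edgeSet_eq_edgesWithin_univ, hcount, card_pair hab]
    omega
  intro V hV
  rw [edgesWithin_addVertex]
  set V' := V.preimage Fin.castSucc (Fin.castSucc_injective n).injOn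
  split_ifs with hlast
  · have hV' : #V' + 1 = #V := by rw [card_preimage_castSucc, card_erase_add_one hlast]
    have h_le_two : #({a, b} ∩ V') ≤ 2 := (card_le_card inter_subset_left).trans card_le_two
    have h_le_card : #({a, b} ∩ V') ≤ #V' := card_le_card inter_subset_right
    rcases le_or_gt 2 #V' with hV'_two | hV'_one
    · have := hsparse V' hV'_two
      omega
    · rw [edgesWithin_eq_zero_of_card_le_one H' (by omega)]
      omega
  · have hV' : #V' = #V := by rw [card_preimage_castSucc, erase_eq_of_notMem hlast]
    have := hsparse V' (hV' ▸ hV)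
    omega
end
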